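/- Let R be a rational map of degree at least 2. A closed RO-invariant subset Y ⊆ ℂ∞ is prime if and only if there exists a point x ∈ ℂ∞ with Y = closure(RO(x)). Moreover, if Y is prime and has no isolated points, then the generating point x can be chosen outside ⋃_{j≥0} R⁻ʲ(Crit(R)), and then closure(RO(x)) = closure(orb(x)), where orb(x) is the full orbit of x. -/

import Mathlib

open scoped Classical

noncomputable section

/-- The Riemann sphere `ℂ∞`, modelled as the one-point compactification of `ℂ`. -/
abbrev Sphere : Type := OnePoint ℂ

/-- Abstract data of a rational map of degree at least 2 on the Riemann sphere `ℂ∞`,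
recorded together with its local valency function `val` and the basic analytic facts:
the map is a continuous open finite-to-one surjection, for every `y` one has
`∑_{x ∈ R⁻¹(y)} val(R,x) = deg R` and the Riemann–Hurwitz identity
`∑_x (val(R,x) − 1) = 2 deg R − 2`. -/
structure RationalMap where
  toFun : Sphere → Sphere
  deg : ℕ
  two_le_deg : 2 ≤ deg
  /-- `val x` is the local valency (multiplicity) of the map at `x`. -/
  val : Sphere → ℕ
  one_le_val : ∀ x, 1 ≤ val x
  continuous_toFun : Continuous toFun
  isOpenMap_toFun : IsOpenMap toFun
  surjective_toFun : Function.Surjective toFun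
  finite_fiber : ∀ y, (toFun ⁻¹' {y}).Finite
  crit_finite : {x | 2 ≤ val x}.Finite
  val_sum : ∀ y, ∑ x ∈ (finite_fiber y).toFinset, val x = deg
  riemann_hurwitz : ∑ x ∈ crit_finite.toFinset, (val x - 1) = 2 * deg - 2

namespace RationalMap

variable (R : RationalMap)

/-- The set of critical points of `R` (points of valency at least `2`). -/
def Crit : Set Sphere := {x | 2 ≤ R.val x}

/-- The local valency `val(Rⁿ, x)` of the `n`-th iterate of `R` at `x`, computed by the
chain rule for valencies: `val(Rⁿ,x) = ∏_{j<n} val(R, Rʲ(x))`. -/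
def valIter (n : ℕ) (x : Sphere) : ℕ :=
  ∏ j ∈ Finset.range n, R.val (R.toFun^[j] x)

/-- The restricted orbit `RO(x)` of a point `x`:
`RO(x) = { y : Rⁿ(y) = Rᵐ(x) and val(Rⁿ,y) = val(Rᵐ,x) for some n,m ∈ ℕ }`. -/
def RO (x : Sphere) : Set Sphere :=
  {y | ∃ n m : ℕ, R.toFun^[n] y = R.toFun^[m] x ∧ R.valIter n y = R.valIter m x}

/-- A set `Y` is `RO`-invariant when `x ∈ Y` implies `RO(x) ⊆ Y`. -/
def ROInvariant (Y : Set Sphere) : Prop := ∀ x ∈ Y, R.RO x ⊆ Y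

/-- The full orbit of `x`. -/
def Orb (x : Sphere) : Set Sphere :=
  {y | ∃ n m : ℕ, R.toFun^[n] x = R.toFun^[m] y}

/-- `x` is a periodic point of `R`. -/
def Periodic (x : Sphere) : Prop := ∃ p : ℕ, 0 < p ∧ R.toFun^[p] x = x

/-- `x` is pre-periodic: some forward iterate of `x` is periodic. -/
def PrePeriodic (x : Sphere) : Prop := ∃ n : ℕ, R.Periodic (R.toFun^[n] x)

/-- `x` is pre-critical: some forward iterate of `x` (including `x` itself) is critical. -/
def PreCritical (x : Sphere) : Prop := ∃ n : ℕ, R.toFun^[n] x ∈ R.Crit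

end RationalMap

/-- `x` is an isolated point of the set `Y`. -/
def IsIsolatedIn (x : Sphere) (Y : Set Sphere) : Prop :=
  ∃ U : Set Sphere, IsOpen U ∧ U ∩ Y = {x}

/-- A nonempty closed `RO`-invariant set `Y` is prime when `Y ⊆ B ∪ C` for closed
`RO`-invariant sets `B`, `C` implies `Y ⊆ B` or `Y ⊆ C`. -/
def RationalMap.IsPrimeSet (R : RationalMap) (Y : Set Sphere) : Prop :=
  Y.Nonempty ∧ IsClosed Y ∧ R.ROInvariant Y ∧
    ∀ B C : Set Sphere, IsClosed B → IsClosed C → R.ROInvariant B → R.ROInvariant C →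
      Y ⊆ B ∪ C → Y ⊆ B ∨ Y ⊆ C

namespace RationalMap
variable {R : RationalMap}

lemma valIter_add (m n : ℕ) (x : Sphere) :
    R.valIter (m + n) x = R.valIter m x * R.valIter n (R.toFun^[m] x) := by
  unfold valIter
  rw [Finset.prod_range_add]
  congr 1
  refine Finset.prod_congr rfl fun j _ => ?_
  rw [add_comm m j, Function.iterate_add_apply]

lemma valIter_eq_one_iff {n : ℕ} {x : Sphere} :
    R.valIter n x = 1 ↔ ∀ j < n, R.toFun^[j] x ∉ R.Crit := by
  unfold valIter
  rw [Finset.prod_eq_one_iff_of_one_le' (fun i _ => R.one_le_val _)]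
  constructor
  · intro h j hj hc
    have := h j (Finset.mem_range.2 hj)
    simp only [Crit, Set.mem_setOf_eq] at hc
    omega
  · intro h j hj
    have h1 := R.one_le_val (R.toFun^[j] x)
    have h2 := h j (Finset.mem_range.1 hj)
    simp only [Crit, Set.mem_setOf_eq, not_le] at h2
    omega

lemma mem_RO_self (x : Sphere) : x ∈ R.RO x := ⟨0, 0, rfl, rfl⟩

lemma RO_symm {x y : Sphere} (h : y ∈ R.RO x) : x ∈ R.RO y := by
  obtain ⟨n, m, h1, h2⟩ := h; exact ⟨m, n, h1.symm, h2.symm⟩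

lemma RO_trans {x y z : Sphere} (hzy : z ∈ R.RO y) (hyx : y ∈ R.RO x) : z ∈ R.RO x := by
  obtain ⟨a, b, h1, h2⟩ := hzy
  obtain ⟨n, m, h3, h4⟩ := hyx
  refine ⟨a + n, m + b, ?_, ?_⟩
  · calc R.toFun^[a + n] z = R.toFun^[n + a] z := by rw [add_comm]
      _ = R.toFun^[n] (R.toFun^[a] z) := Function.iterate_add_apply _ _ _ _
      _ = R.toFun^[n] (R.toFun^[b] y) := by rw [h1]
      _ = R.toFun^[n + b] y := (Function.iterate_add_apply _ _ _ _).symm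
      _ = R.toFun^[b + n] y := by rw [add_comm]
      _ = R.toFun^[b] (R.toFun^[n] y) := Function.iterate_add_apply _ _ _ _
      _ = R.toFun^[b] (R.toFun^[m] x) := by rw [h3]
      _ = R.toFun^[b + m] x := (Function.iterate_add_apply _ _ _ _).symm
      _ = R.toFun^[m + b] x := by rw [add_comm]
  · calc R.valIter (a + n) z = R.valIter a z * R.valIter n (R.toFun^[a] z) := valIter_add _ _ _
      _ = R.valIter b y * R.valIter n (R.toFun^[b] y) := by rw [h1, h2]
      _ = R.valIter (b + n) y := (valIter_add _ _ _).symm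
      _ = R.valIter (n + b) y := by rw [add_comm]
      _ = R.valIter n y * R.valIter b (R.toFun^[n] y) := valIter_add _ _ _
      _ = R.valIter m x * R.valIter b (R.toFun^[m] x) := by rw [h3, h4]
      _ = R.valIter (m + b) x := (valIter_add _ _ _).symm

lemma RO_eq_of_mem {x y : Sphere} (h : y ∈ R.RO x) : R.RO y = R.RO x := by
  ext z
  exact ⟨fun hz => RO_trans hz h, fun hz => RO_trans hz (RO_symm h)⟩


/-- `Fn n` : points whose `n`-th iterate valency is `≥ 2`, i.e. hitting `Crit` before time `n`. -/
def Fn (R : RationalMap) (n : ℕ) : Set Sphere := {w | ∃ j < n, R.toFun^[j] w ∈ R.Crit}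

lemma not_mem_Fn_iff {n : ℕ} {x : Sphere} : x ∉ R.Fn n ↔ R.valIter n x = 1 := by
  rw [valIter_eq_one_iff]
  simp only [Fn, Set.mem_setOf_eq, not_exists, not_and]

lemma preimage_finite {s : Set Sphere} (hs : s.Finite) : (R.toFun ⁻¹' s).Finite := by
  have : R.toFun ⁻¹' s = ⋃ y ∈ s, R.toFun ⁻¹' {y} := by
    ext z; simp
  rw [this]
  exact Set.Finite.biUnion hs fun y _ => R.finite_fiber y

lemma preimage_iterate_finite (n : ℕ) {s : Set Sphere} (hs : s.Finite) :
    (R.toFun^[n] ⁻¹' s).Finite := by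
  induction n with
  | zero => simpa using hs
  | succ k ih =>
    rw [Function.iterate_succ]
    rw [Set.preimage_comp]
    exact preimage_finite ih

lemma Fn_finite (n : ℕ) : (R.Fn n).Finite := by
  have : R.Fn n = ⋃ j ∈ Finset.range n, (R.toFun^[j] ⁻¹' R.Crit) := by
    ext w; simp [Fn]
  rw [this]
  exact Set.Finite.biUnion (Finset.range n).finite_toSet
    fun j _ => preimage_iterate_finite j R.crit_finite

lemma continuous_iterate (n : ℕ) : Continuous (R.toFun^[n]) :=
  R.continuous_toFun.iterate n

lemma isOpenMap_iterate (n : ℕ) : IsOpenMap (R.toFun^[n]) := by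
  induction n with
  | zero => exact IsOpenMap.id
  | succ k ih => rw [Function.iterate_succ]; exact ih.comp R.isOpenMap_toFun

end RationalMap

/-- In a T1 space, a point in the closure of `S \ {p}` is in the closure of `S` minus any
finite set. -/
lemma mem_closure_diff_finite {p : Sphere} {S E : Set Sphere}
    (hp : p ∈ closure (S \ {p})) (hE : E.Finite) : p ∈ closure (S \ E) := by
  rw [mem_closure_iff] at hp ⊢
  intro O hO hpO
  have hEc : IsClosed (E \ {p}) := (hE.subset Set.diff_subset).isClosed
  have hO' : IsOpen (O \ (E \ {p})) := hO.sdiff hEc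
  have hpO' : p ∈ O \ (E \ {p}) := ⟨hpO, fun h => h.2 rfl⟩
  obtain ⟨q, hqO, hqS, hqp⟩ := hp _ hO' hpO'
  refine ⟨q, hqO.1, hqS, fun hqE => ?_⟩
  exact hqO.2 ⟨hqE, hqp⟩


namespace RationalMap
variable {R : RationalMap}

lemma valIter_zero (x : Sphere) : R.valIter 0 x = 1 := by simp [valIter]

lemma valIter_one (x : Sphere) : R.valIter 1 x = R.val x := by simp [valIter]

lemma val_eq_one_of_not_crit {x : Sphere} (h : x ∉ R.Crit) : R.val x = 1 := by
  have h1 := R.one_le_val x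
  simp only [Crit, Set.mem_setOf_eq, not_le] at h
  omega

/-- KEY LEMMA: the closure of an `RO`-invariant set is `RO`-invariant. -/
lemma roInvariant_closure {S : Set Sphere} (hS : R.ROInvariant S) :
    R.ROInvariant (closure S) := by
  intro y hy z hz
  by_cases hyS : y ∈ S
  · exact subset_closure (hS y hyS hz)
  obtain ⟨n, m, h1, h2⟩ := hz
  have hyd : y ∈ closure (S \ {y}) := by
    rwa [Set.diff_singleton_eq_self hyS]
  have hEfin : (R.Fn m ∪ (R.toFun^[m] ⁻¹' (R.toFun^[n] '' R.Fn n))).Finite :=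
    (Fn_finite m).union (preimage_iterate_finite m ((Fn_finite n).image _))
  have hyE := mem_closure_diff_finite hyd hEfin
  rw [mem_closure_iff] at hyE ⊢
  intro O hO hzO
  have hN : IsOpen (R.toFun^[m] ⁻¹' (R.toFun^[n] '' O)) :=
    (isOpenMap_iterate n O hO).preimage (continuous_iterate m)
  have hyN : y ∈ R.toFun^[m] ⁻¹' (R.toFun^[n] '' O) := ⟨z, hzO, h1⟩
  obtain ⟨y', hy'N, hy'S, hy'E⟩ := hyE _ hN hyN
  obtain ⟨z₀, hz₀O, hz₀⟩ := hy'N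
  have hz₀Fn : z₀ ∉ R.Fn n := fun h => hy'E (Or.inr ⟨z₀, h, hz₀⟩)
  have hy'Fm : y' ∉ R.Fn m := fun h => hy'E (Or.inl h)
  have : z₀ ∈ R.RO y' :=
    ⟨n, m, hz₀, by rw [not_mem_Fn_iff.1 hz₀Fn, not_mem_Fn_iff.1 hy'Fm]⟩
  exact ⟨z₀, hz₀O, hS y' hy'S this⟩

variable {Y : Set Sphere}

lemma not_isolated_mem_closure (hni : ∀ x, ¬IsIsolatedIn x Y) {p : Sphere} (hp : p ∈ Y) :
    p ∈ closure (Y \ {p}) := by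
  rw [mem_closure_iff]
  intro O hO hpO
  by_contra h
  rw [Set.not_nonempty_iff_eq_empty] at h
  refine hni p ⟨O, hO, ?_⟩
  ext q
  constructor
  · rintro ⟨hqO, hqY⟩
    by_contra hqp
    have hmem : q ∈ O ∩ (Y \ {p}) := ⟨hqO, hqY, hqp⟩
    rw [h] at hmem
    exact hmem.elim
  · rintro rfl
    exact ⟨hpO, hp⟩

lemma map_mem (hYclosed : IsClosed Y) (hYinv : R.ROInvariant Y)
    (hni : ∀ x, ¬IsIsolatedIn x Y) {y : Sphere} (hy : y ∈ Y) : R.toFun y ∈ Y := by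
  by_cases hc : y ∈ R.Crit
  · have : R.toFun y ∈ closure Y := by
      rw [mem_closure_iff]
      intro O hO hmO
      have hN : IsOpen (R.toFun ⁻¹' O) := hO.preimage R.continuous_toFun
      have hyd := mem_closure_diff_finite (not_isolated_mem_closure hni hy)
        (R.crit_finite.insert y)
      rw [mem_closure_iff] at hyd
      obtain ⟨y', hy'N, hy'Y, hy'E⟩ := hyd _ hN hmO
      have hy'c : y' ∉ R.Crit := fun h => hy'E (Set.mem_insert_of_mem _ h)
      have : R.toFun y' ∈ R.RO y' := by
        refine ⟨0, 1, by simp, ?_⟩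
        rw [valIter_zero, valIter_one, val_eq_one_of_not_crit hy'c]
      exact ⟨R.toFun y', hy'N, hYinv y' hy'Y this⟩
    rwa [hYclosed.closure_eq] at this
  · refine hYinv y hy ⟨0, 1, by simp, ?_⟩
    rw [valIter_zero, valIter_one, val_eq_one_of_not_crit hc]

lemma mem_of_map_mem (hYclosed : IsClosed Y) (hYinv : R.ROInvariant Y)
    (hni : ∀ x, ¬IsIsolatedIn x Y) {z : Sphere} (hz : R.toFun z ∈ Y) : z ∈ Y := by
  by_cases hc : z ∈ R.Crit
  · have : z ∈ closure Y := by
      rw [mem_closure_iff]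
      intro O hO hzO
      have hN : IsOpen (R.toFun '' O) := R.isOpenMap_toFun O hO
      have hyN : R.toFun z ∈ R.toFun '' O := ⟨z, hzO, rfl⟩
      have hyd := mem_closure_diff_finite (not_isolated_mem_closure hni hz)
        ((R.crit_finite.image R.toFun).insert (R.toFun z))
      rw [mem_closure_iff] at hyd
      obtain ⟨y', hy'N, hy'Y, hy'E⟩ := hyd _ hN hyN
      obtain ⟨z', hz'O, hz'⟩ := hy'N
      have hz'c : z' ∉ R.Crit := fun h => hy'E (Set.mem_insert_of_mem _ ⟨z', h, hz'⟩)
      have : z' ∈ R.RO y' := by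
        refine ⟨1, 0, by simp [hz'], ?_⟩
        rw [valIter_zero, valIter_one, val_eq_one_of_not_crit hz'c]
      exact ⟨z', hz'O, hYinv y' hy'Y this⟩
    rwa [hYclosed.closure_eq] at this
  · refine hYinv (R.toFun z) hz ⟨1, 0, by simp, ?_⟩
    rw [valIter_zero, valIter_one, val_eq_one_of_not_crit hc]

lemma iterate_mem (hYclosed : IsClosed Y) (hYinv : R.ROInvariant Y)
    (hni : ∀ x, ¬IsIsolatedIn x Y) (m : ℕ) {y : Sphere} (hy : y ∈ Y) :
    R.toFun^[m] y ∈ Y := by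
  induction m with
  | zero => simpa using hy
  | succ k ih =>
    rw [Function.iterate_succ_apply']
    exact map_mem hYclosed hYinv hni ih

lemma mem_of_iterate_mem (hYclosed : IsClosed Y) (hYinv : R.ROInvariant Y)
    (hni : ∀ x, ¬IsIsolatedIn x Y) (m : ℕ) {z : Sphere} (hz : R.toFun^[m] z ∈ Y) :
    z ∈ Y := by
  induction m with
  | zero => simpa using hz
  | succ k ih =>
    rw [Function.iterate_succ_apply'] at hz
    exact ih (mem_of_map_mem hYclosed hYinv hni hz)

end RationalMap

namespace RationalMap
variable {R : RationalMap} {Y : Set Sphere}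

/-- The open set of points admitting a "simple" `RO`-connection into `U`. -/
def Wset (R : RationalMap) (U : Set Sphere) : Set Sphere :=
  ⋃ n, ⋃ m, (R.toFun^[m] ⁻¹' (R.toFun^[n] '' (U \ R.Fn n)))

lemma isOpen_Wset {U : Set Sphere} (hU : IsOpen U) : IsOpen (R.Wset U) :=
  isOpen_iUnion fun n => isOpen_iUnion fun m =>
    (isOpenMap_iterate n _ (hU.sdiff (Fn_finite n).isClosed)).preimage (continuous_iterate m)

lemma dense_Wset (hprime : R.IsPrimeSet Y) (hYclosed : IsClosed Y) (hYinv : R.ROInvariant Y)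
    (hni : ∀ x, ¬IsIsolatedIn x Y) {U V : Set Sphere} (hU : IsOpen U)
    (hUY : (U ∩ Y).Nonempty) (hV : IsOpen V) (hVY : (V ∩ Y).Nonempty) :
    (V ∩ Y ∩ R.Wset U).Nonempty := by
  classical
  set S₁ : Set Sphere := {y | y ∈ Y ∧ R.RO y ∩ U = ∅} with hS₁def
  set S₂ : Set Sphere := {y | y ∈ Y ∧ (R.RO y ∩ U).Nonempty} with hS₂def
  have hS₁inv : R.ROInvariant S₁ := by
    intro a ha w hw
    exact ⟨hYinv a ha.1 hw, by rw [RO_eq_of_mem hw]; exact ha.2⟩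
  have hS₂inv : R.ROInvariant S₂ := by
    intro a ha w hw
    exact ⟨hYinv a ha.1 hw, by rw [RO_eq_of_mem hw]; exact ha.2⟩
  have hcover : Y ⊆ closure S₁ ∪ closure S₂ := by
    intro y hy
    rcases Set.eq_empty_or_nonempty (R.RO y ∩ U) with h | h
    · exact Or.inl (subset_closure ⟨hy, h⟩)
    · exact Or.inr (subset_closure ⟨hy, h⟩)
  have hYS₂ : Y ⊆ closure S₂ := by
    rcases hprime.2.2.2 (closure S₁) (closure S₂) isClosed_closure isClosed_closure
      (roInvariant_closure hS₁inv) (roInvariant_closure hS₂inv) hcover with h | h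
    · exfalso
      obtain ⟨p₀, hp₀U, hp₀Y⟩ := hUY
      have hUS₁ : U ∩ S₁ = ∅ := by
        ext s
        simp only [Set.mem_inter_iff, Set.mem_empty_iff_false, iff_false, not_and]
        intro hsU hsS₁
        have : s ∈ R.RO s ∩ U := ⟨mem_RO_self s, hsU⟩
        rw [hsS₁.2] at this
        exact this
      have := hU.inter_closure (t := S₁)
      rw [hUS₁, closure_empty] at this
      exact this ⟨hp₀U, h hp₀Y⟩ |>.elim
    · exact h
  obtain ⟨p, hpV, hpY⟩ := hVY
  have hpS₂ := hYS₂ hpY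
  rw [mem_closure_iff] at hpS₂
  obtain ⟨y, hyV, hyY, z, hzRO, hzU⟩ := hpS₂ V hV hpV
  obtain ⟨n, m, h1, h2⟩ := hzRO
  set q := R.toFun^[m] y with hq
  have hqY : q ∈ Y := iterate_mem hYclosed hYinv hni m hyY
  have hNopen : IsOpen ((R.toFun^[m] '' V) ∩ (R.toFun^[n] '' U)) :=
    (isOpenMap_iterate m V hV).inter (isOpenMap_iterate n U hU)
  have hqN : q ∈ (R.toFun^[m] '' V) ∩ (R.toFun^[n] '' U) :=
    ⟨⟨y, hyV, rfl⟩, ⟨z, hzU, h1⟩⟩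
  have hGfin : ((R.toFun^[m] '' R.Fn m) ∪ (R.toFun^[n] '' R.Fn n)).Finite :=
    ((Fn_finite m).image _).union ((Fn_finite n).image _)
  have hq' := mem_closure_diff_finite (not_isolated_mem_closure hni hqY) hGfin
  rw [mem_closure_iff] at hq'
  obtain ⟨q', ⟨hq'V, hq'U⟩, hq'Y, hq'G⟩ := hq' _ hNopen hqN
  obtain ⟨y', hy'V, hy'map⟩ := hq'V
  obtain ⟨z', hz'U, hz'map⟩ := hq'U
  have hy'Fm : y' ∉ R.Fn m := fun h => hq'G (Or.inl ⟨y', h, hy'map⟩)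
  have hz'Fn : z' ∉ R.Fn n := fun h => hq'G (Or.inr ⟨z', h, hz'map⟩)
  have hy'Y : y' ∈ Y := mem_of_iterate_mem hYclosed hYinv hni m (by rw [hy'map]; exact hq'Y)
  refine ⟨y', ⟨hy'V, hy'Y⟩, ?_⟩
  refine Set.mem_iUnion.2 ⟨n, Set.mem_iUnion.2 ⟨m, ?_⟩⟩
  exact ⟨z', ⟨hz'U, hz'Fn⟩, by rw [hz'map, hy'map]⟩

end RationalMap

-- second countability (copied from t2)
open OnePoint TopologicalSpace Set in
instance Sphere.secondCountable : SecondCountableTopology Sphere := by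
  obtain ⟨b, hbc, -, hb⟩ := exists_countable_basis ℂ
  refine IsTopologicalBasis.secondCountableTopology (b :=
    ((fun u => ((↑) : ℂ → Sphere) '' u) '' b) ∪
    ((fun n : ℕ => {(∞ : Sphere)} ∪ ((↑) : ℂ → Sphere) '' (Metric.closedBall (0:ℂ) n)ᶜ) ''
      Set.univ)) ?_ ?_
  · have hpre : ∀ n : ℕ, ((↑) : ℂ → Sphere) ⁻¹'
        ({(∞ : Sphere)} ∪ ((↑) : ℂ → Sphere) '' (Metric.closedBall (0:ℂ) n)ᶜ) =
        (Metric.closedBall (0:ℂ) n)ᶜ := by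
      intro n
      rw [Set.preimage_union, Set.preimage_image_eq _ OnePoint.coe_injective]
      have : ((↑) : ℂ → Sphere) ⁻¹' {(∞ : Sphere)} = (∅ : Set ℂ) := by
        ext z; simp
      rw [this, Set.empty_union]
    refine isTopologicalBasis_of_isOpen_of_nhds ?_ ?_
    · rintro v (⟨u, hu, rfl⟩ | ⟨n, -, rfl⟩)
      · exact OnePoint.isOpen_image_coe.2 (hb.isOpen hu)
      · rw [OnePoint.isOpen_iff_of_mem (by simp), hpre n, compl_compl]
        exact ⟨Metric.isClosed_closedBall, isCompact_closedBall (0:ℂ) (n:ℝ)⟩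
    · rintro (- | x) U hxU hU
      · have hinf : (∞ : Sphere) ∈ U := hxU
        have hK : IsClosed (((↑) : ℂ → Sphere) ⁻¹' U)ᶜ ∧ IsCompact (((↑) : ℂ → Sphere) ⁻¹' U)ᶜ :=
          (OnePoint.isOpen_iff_of_mem hinf).1 hU
        obtain ⟨r, hr⟩ := hK.2.isBounded.subset_closedBall (0:ℂ)
        obtain ⟨n, hn⟩ := exists_nat_ge r
        refine ⟨{(∞ : Sphere)} ∪ ((↑) : ℂ → Sphere) '' (Metric.closedBall (0:ℂ) n)ᶜ,
          Or.inr ⟨n, trivial, rfl⟩, Or.inl rfl, ?_⟩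
        rintro p (hp | ⟨z, hz, rfl⟩)
        · rw [Set.mem_singleton_iff] at hp; rw [hp]; exact hinf
        · by_contra hzU
          have : z ∈ (((↑) : ℂ → Sphere) ⁻¹' U)ᶜ := hzU
          exact hz (Metric.closedBall_subset_closedBall hn (hr this))
      · have hx' : x ∈ ((↑) : ℂ → Sphere) ⁻¹' U := hxU
        obtain ⟨u, hub, hxu, huU⟩ := hb.exists_subset_of_mem_open hx'
          (hU.preimage OnePoint.continuous_coe)
        exact ⟨((↑) : ℂ → Sphere) '' u, Or.inl ⟨u, hub, rfl⟩, ⟨x, hxu, rfl⟩,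
          (Set.image_mono huU).trans ((Set.image_preimage_subset _ _))⟩
  · exact (hbc.image _).union ((Set.countable_univ).image _)

namespace RationalMap
variable {R : RationalMap} {Y : Set Sphere}

lemma exists_generator (hprime : R.IsPrimeSet Y) (hYclosed : IsClosed Y)
    (hYinv : R.ROInvariant Y) (hni : ∀ x, ¬IsIsolatedIn x Y) :
    ∃ x : Sphere, x ∈ Y ∧ x ∉ (⋃ j : ℕ, (R.toFun^[j]) ⁻¹' R.Crit) ∧
      Y = closure (R.RO x) ∧ closure (R.RO x) = closure (R.Orb x) := by
  classical
  obtain ⟨b, hbc, -, hb⟩ := TopologicalSpace.exists_countable_basis Sphere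
  set P : Set Sphere := ⋃ j : ℕ, (R.toFun^[j]) ⁻¹' R.Crit with hPdef
  have hPc : P.Countable :=
    Set.countable_iUnion fun j => (preimage_iterate_finite j R.crit_finite).countable
  have hYne : Y.Nonempty := hprime.1
  haveI : Nonempty ↥Y := hYne.to_subtype
  haveI : CompactSpace ↥Y := isCompact_iff_compactSpace.mp hYclosed.isCompact
  set I : Set (Set Sphere) := {U ∈ b | (U ∩ Y).Nonempty} with hIdef
  set 𝒮 : Set (Set ↥Y) :=
    ((fun U => Subtype.val ⁻¹' R.Wset U) '' I) ∪ ((fun p => Subtype.val ⁻¹' ({p}ᶜ)) '' P)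
    with h𝒮def
  have h𝒮c : 𝒮.Countable := ((hbc.mono (Set.sep_subset _ _)).image _).union (hPc.image _)
  have h𝒮open : ∀ s ∈ 𝒮, IsOpen s := by
    rintro s (⟨U, hUI, rfl⟩ | ⟨p, hp, rfl⟩)
    · exact (isOpen_Wset (hb.isOpen hUI.1)).preimage continuous_subtype_val
    · exact (isOpen_compl_singleton).preimage continuous_subtype_val
  have h𝒮dense : ∀ s ∈ 𝒮, Dense s := by
    rintro s (⟨U, hUI, rfl⟩ | ⟨p, hp, rfl⟩) <;> rw [dense_iff_inter_open]
    · rintro O hO ⟨⟨v, hvY⟩, hvO⟩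
      obtain ⟨t, ht, rfl⟩ := isOpen_induced_iff.1 hO
      have hvt : v ∈ t := hvO
      obtain ⟨y', ⟨hy'V, hy'Y⟩, hy'W⟩ :=
        dense_Wset hprime hYclosed hYinv hni (hb.isOpen hUI.1) hUI.2 ht ⟨v, hvt, hvY⟩
      exact ⟨⟨y', hy'Y⟩, hy'V, hy'W⟩
    · rintro O hO ⟨⟨v, hvY⟩, hvO⟩
      obtain ⟨t, ht, rfl⟩ := isOpen_induced_iff.1 hO
      have hvt : v ∈ t := hvO
      by_cases hvp : v = p
      · have hcl := not_isolated_mem_closure hni (show p ∈ Y by rw [← hvp]; exact hvY)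
        rw [mem_closure_iff] at hcl
        obtain ⟨w, hwt, hwY, hwp⟩ := hcl t ht (by rw [← hvp]; exact hvt)
        exact ⟨⟨w, hwY⟩, hwt, hwp⟩
      · exact ⟨⟨v, hvY⟩, hvt, hvp⟩
  have hd := dense_sInter_of_isOpen h𝒮open h𝒮c h𝒮dense
  obtain ⟨x, hx⟩ := hd.nonempty
  rw [Set.mem_sInter] at hx
  have hxY : (x : Sphere) ∈ Y := x.2
  have hxP : (x : Sphere) ∉ P := by
    intro hmem
    exact hx _ (Or.inr ⟨(x : Sphere), hmem, rfl⟩) rfl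
  have hxval : ∀ m, R.valIter m (x : Sphere) = 1 := by
    intro m
    rw [← not_mem_Fn_iff]
    rintro ⟨j, hj, hcrit⟩
    exact hxP (Set.mem_iUnion.2 ⟨j, hcrit⟩)
  have hxW : ∀ U ∈ I, (x : Sphere) ∈ R.Wset U := fun U hU => hx _ (Or.inl ⟨U, hU, rfl⟩)
  have hYeq : Y = closure (R.RO (x : Sphere)) := by
    refine Set.Subset.antisymm ?_ (closure_minimal (hYinv _ hxY) hYclosed)
    intro p hp
    rw [mem_closure_iff]
    intro O hO hpO
    obtain ⟨U, hUb, hpU, hUO⟩ := hb.exists_subset_of_mem_open hpO hO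
    have hUI : U ∈ I := ⟨hUb, ⟨p, hpU, hp⟩⟩
    obtain ⟨n, hn⟩ := Set.mem_iUnion.1 (hxW U hUI)
    obtain ⟨m, hm⟩ := Set.mem_iUnion.1 hn
    obtain ⟨z, ⟨hzU, hzF⟩, hzeq⟩ := hm
    refine ⟨z, hUO hzU, n, m, hzeq, ?_⟩
    rw [not_mem_Fn_iff.1 hzF, hxval m]
  have hOrbY : R.Orb (x : Sphere) ⊆ Y := by
    rintro w ⟨n, m, heq⟩
    have hmem : R.toFun^[m] w ∈ Y := by
      rw [← heq]; exact iterate_mem hYclosed hYinv hni n hxY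
    exact mem_of_iterate_mem hYclosed hYinv hni m hmem
  have hROsub : R.RO (x : Sphere) ⊆ R.Orb (x : Sphere) := by
    rintro w ⟨n, m, heq, -⟩
    exact ⟨m, n, heq.symm⟩
  exact ⟨x, hxY, hxP, hYeq, Set.Subset.antisymm (closure_mono hROsub)
    ((closure_minimal hOrbY hYclosed).trans hYeq.le)⟩

lemma isolated_case (hprime : R.IsPrimeSet Y) (hYclosed : IsClosed Y)
    (hYinv : R.ROInvariant Y) {x₀ : Sphere} {U : Set Sphere} (hU : IsOpen U)
    (hUY : U ∩ Y = {x₀}) : Y = closure (R.RO x₀) := by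
  have hx₀UY : x₀ ∈ U ∩ Y := by rw [hUY]; rfl
  have hx₀Y : x₀ ∈ Y := hx₀UY.2
  have hROinv : R.ROInvariant (R.RO x₀) := by
    intro a ha w hw
    rw [← RO_eq_of_mem ha]
    exact hw
  set S₁ : Set Sphere := {y | y ∈ Y ∧ x₀ ∉ R.RO y} with hS₁def
  have hS₁inv : R.ROInvariant S₁ := by
    intro a ha w hw
    exact ⟨hYinv a ha.1 hw, by rw [RO_eq_of_mem hw]; exact ha.2⟩
  have hcover : Y ⊆ closure (R.RO x₀) ∪ closure S₁ := by
    intro y hy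
    by_cases h : x₀ ∈ R.RO y
    · exact Or.inl (subset_closure (RO_symm h))
    · exact Or.inr (subset_closure ⟨hy, h⟩)
  rcases hprime.2.2.2 (closure (R.RO x₀)) (closure S₁) isClosed_closure isClosed_closure
    (roInvariant_closure hROinv) (roInvariant_closure hS₁inv) hcover with h | h
  · exact Set.Subset.antisymm h (closure_minimal (hYinv x₀ hx₀Y) hYclosed)
  · exfalso
    have hUS₁ : U ∩ S₁ = ∅ := by
      ext s
      simp only [Set.mem_inter_iff, Set.mem_empty_iff_false, iff_false, not_and]
      intro hsU hsS₁
      have : s ∈ U ∩ Y := ⟨hsU, hsS₁.1⟩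
      rw [hUY] at this
      rw [Set.mem_singleton_iff] at this
      subst this
      exact hsS₁.2 (mem_RO_self s)
    have hsub := hU.inter_closure (t := S₁)
    rw [hUS₁, closure_empty] at hsub
    exact hsub ⟨hx₀UY.1, h hx₀Y⟩

lemma converse_prime (hYclosed : IsClosed Y) (hYinv : R.ROInvariant Y) {x : Sphere}
    (hx : Y = closure (R.RO x)) : R.IsPrimeSet Y := by
  have hxY : x ∈ Y := by rw [hx]; exact subset_closure (mem_RO_self x)
  refine ⟨⟨x, hxY⟩, hYclosed, hYinv, ?_⟩
  intro B C hBc hCc hBi hCi hYBC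
  rcases hYBC hxY with hB | hC
  · exact Or.inl (by rw [hx]; exact closure_minimal (hBi x hB) hBc)
  · exact Or.inr (by rw [hx]; exact closure_minimal (hCi x hC) hCc)

end RationalMap


/-- A closed `RO`-invariant set `Y ⊆ ℂ∞` is prime if and only if
`Y = closure (RO(x))` for some point `x`. Moreover, if `Y` is prime and has no isolated
points, then the generating point `x` can be chosen outside `⋃ⱼ R⁻ʲ(Crit R)`, and then
`closure (RO(x)) = closure (orb(x))` where `orb(x)` is the full orbit of `x`. -/
theorem stmt_16 (R : RationalMap) (Y : Set Sphere)
    (hYclosed : IsClosed Y) (hYinv : R.ROInvariant Y) :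
    (R.IsPrimeSet Y ↔ ∃ x : Sphere, Y = closure (R.RO x)) ∧
    (R.IsPrimeSet Y → (∀ x, ¬IsIsolatedIn x Y) →
      ∃ x : Sphere, x ∈ Y ∧ x ∉ (⋃ j : ℕ, (R.toFun^[j]) ⁻¹' R.Crit) ∧
        Y = closure (R.RO x) ∧ closure (R.RO x) = closure (R.Orb x)) := by
  constructor
  · constructor
    · intro hprime
      by_cases hiso : ∃ x, IsIsolatedIn x Y
      · obtain ⟨x₀, U, hU, hUY⟩ := hiso
        exact ⟨x₀, RationalMap.isolated_case hprime hYclosed hYinv hU hUY⟩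
      · push_neg at hiso
        obtain ⟨x, -, -, hYeq, -⟩ :=
          RationalMap.exists_generator hprime hYclosed hYinv hiso
        exact ⟨x, hYeq⟩
    · rintro ⟨x, hx⟩
      exact RationalMap.converse_prime hYclosed hYinv hx
  · intro hprime hni
    exact RationalMap.exists_generator hprime hYclosed hYinv hni
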